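/- Let ã, r̃, q̃ be real numbers with 0 < ã < 1, r̃ > 1, ã/r̃ < q̃ < 1, and 1/(r̃+1) < q̃. For p ∈ (0,1], set r*(p) = max( ã/(p·q̃), r̃ ). Define ε(p) = log( 2p(1−q̃) / ( √((1−p)² + 4p(1−q̃)(1/r*(p) − p·q̃)) − (1−p) ) ) for p ∈ (0,1] with p·q̃ < 1/r*(p). Let M = log( 2ã(1−q̃) / ( √((r̃·q̃ − ã)² + 4ã·q̃(1−q̃)(1 − ã)) − (r̃·q̃ − ã) ) ). Then ε(p) ≥ M for every p ∈ (0,1] with p·q̃ < 1/r*(p), and ε(ã/(q̃·r̃)) = M. -/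

import Mathlib

lemma le_root (N b c x : ℝ) (hN : 0 < N) (hc : 0 < c) (hx : 0 < x)
    (h : c * x ^ 2 ≤ b * x + N) :
    x ≤ 2 * N / (Real.sqrt (b ^ 2 + 4 * N * c) - b) := by
  have hD : b < Real.sqrt (b ^ 2 + 4 * N * c) := by
    have h1 : b ≤ Real.sqrt (b ^ 2) := by
      rw [Real.sqrt_sq_eq_abs]; exact le_abs_self b
    have h2 : Real.sqrt (b ^ 2) < Real.sqrt (b ^ 2 + 4 * N * c) :=
      Real.sqrt_lt_sqrt (sq_nonneg b) (by nlinarith)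
    linarith
  rw [le_div_iff₀ (by linarith)]
  have hpos : 0 < 2 * N + x * b := by nlinarith
  have key : x * Real.sqrt (b ^ 2 + 4 * N * c) ≤ 2 * N + x * b := by
    have h1 : x * Real.sqrt (b ^ 2 + 4 * N * c) = Real.sqrt (x ^ 2 * (b ^ 2 + 4 * N * c)) := by
      rw [Real.sqrt_mul (sq_nonneg x), Real.sqrt_sq hx.le]
    rw [h1]
    have h2 : x ^ 2 * (b ^ 2 + 4 * N * c) ≤ (2 * N + x * b) ^ 2 := by nlinarith
    calc Real.sqrt (x ^ 2 * (b ^ 2 + 4 * N * c)) ≤ Real.sqrt ((2 * N + x * b) ^ 2) :=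
          Real.sqrt_le_sqrt h2
      _ = 2 * N + x * b := Real.sqrt_sq hpos.le
  nlinarith [key]

lemma eq_root (N b c x : ℝ) (hN : 0 < N) (hc : 0 < c) (hx : 0 < x)
    (h : c * x ^ 2 = b * x + N) :
    2 * N / (Real.sqrt (b ^ 2 + 4 * N * c) - b) = x := by
  have hcb : 0 < c * x - b := by nlinarith
  have hs : Real.sqrt (b ^ 2 + 4 * N * c) = 2 * c * x - b := by
    rw [show b ^ 2 + 4 * N * c = (2 * c * x - b) ^ 2 by nlinarith]
    exact Real.sqrt_sq (by nlinarith)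
  rw [hs, show 2 * c * x - b - b = 2 * (c * x - b) by ring,
    div_eq_iff (by positivity)]
  linear_combination (-2 : ℝ) * h

/-- The privacy-budget threshold `ε_i(p, q̃)` (for `q̃ < 1`) under the risk profile
`r*(p,q̃) = max{ã/(p·q̃), r̃}`. -/
noncomputable def epsThreshold18 (a r q p : ℝ) : ℝ :=
  Real.log (2 * p * (1 - q) /
    (Real.sqrt ((1 - p) ^ 2 + 4 * p * (1 - q) * (1 / max (a / (p * q)) r - p * q)) - (1 - p)))

set_option maxHeartbeats 2000000 in
theorem stmt_18 (a r q : ℝ) (ha0 : 0 < a) (ha1 : a < 1) (hr : 1 < r)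
    (hq1 : a / r < q) (hq2 : q < 1) (hq3 : 1 / (r + 1) < q) :
    (∀ p : ℝ, 0 < p → p ≤ 1 → p * q < 1 / max (a / (p * q)) r →
      Real.log (2 * a * (1 - q) /
        (Real.sqrt ((r * q - a) ^ 2 + 4 * a * q * (1 - q) * (1 - a)) - (r * q - a)))
        ≤ epsThreshold18 a r q p) ∧
    epsThreshold18 a r q (a / (q * r)) =
      Real.log (2 * a * (1 - q) /
        (Real.sqrt ((r * q - a) ^ 2 + 4 * a * q * (1 - q) * (1 - a)) - (r * q - a))) := by
  have hr0 : (0:ℝ) < r := lt_trans one_pos hr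
  have hq0 : (0:ℝ) < q := lt_trans (by positivity) hq3
  have hqr : a < q * r := by
    have := (div_lt_iff₀ hr0).mp hq1; linarith
  have hq3' : 1 < q * (r + 1) := by
    have := (div_lt_iff₀ (by linarith : (0:ℝ) < r + 1)).mp hq3; linarith
  have hb : 0 < r * q - a := by nlinarith
  have h1q : (0:ℝ) < 1 - q := by linarith
  have h1a : (0:ℝ) < 1 - a := by linarith
  set D : ℝ := (r * q - a) ^ 2 + 4 * (a * (1 - q)) * (q * (1 - a)) with hDdef
  have hD : 0 ≤ D := by positivity
  set s : ℝ := Real.sqrt D with hsdef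
  have hs2 : s ^ 2 = D := Real.sq_sqrt hD
  have hs0 : 0 ≤ s := Real.sqrt_nonneg D
  set x₀ : ℝ := (r * q - a + s) / (2 * (q * (1 - a))) with hxdef
  have hx₀ : 0 < x₀ := by
    apply div_pos (by linarith) (by positivity)
  have H : q * (1 - a) * x₀ ^ 2 = (r * q - a) * x₀ + a * (1 - q) := by
    rw [hxdef]
    field_simp
    nlinarith [hs2]
  have hXval : 2 * a * (1 - q) /
      (Real.sqrt ((r * q - a) ^ 2 + 4 * a * q * (1 - q) * (1 - a)) - (r * q - a)) = x₀ := by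
    have h := eq_root (a * (1 - q)) (r * q - a) (q * (1 - a)) x₀ (by positivity)
      (by positivity) hx₀ H
    rw [show (r * q - a) ^ 2 + 4 * a * q * (1 - q) * (1 - a)
        = (r * q - a) ^ 2 + 4 * (a * (1 - q)) * (q * (1 - a)) by ring,
      show 2 * a * (1 - q) = 2 * (a * (1 - q)) by ring]
    exact h
  have hx1 : 1 ≤ x₀ := by
    by_contra hcon
    push_neg at hcon
    nlinarith [H,
      mul_nonneg (mul_nonneg (mul_nonneg hq0.le h1a.le) hx₀.le)
        (by linarith : (0:ℝ) ≤ 1 - x₀),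
      mul_nonneg (mul_nonneg ha0.le h1q.le) (by linarith : (0:ℝ) ≤ 1 - x₀),
      mul_pos (mul_pos hq0 (by linarith : (0:ℝ) < r - 1)) hx₀]
  have hxq : 1 - q ≤ q * x₀ := by
    by_contra hcon
    push_neg at hcon
    nlinarith [H,
      mul_nonneg (mul_nonneg h1a.le hx₀.le)
        (by linarith : (0:ℝ) ≤ 1 - q - q * x₀),
      mul_pos ha0 (by linarith : (0:ℝ) < 1 - q - q * x₀),
      mul_pos hx₀ (by linarith : (0:ℝ) < q * (r + 1) - 1)]
  constructor
  · intro p hp0 hp1 hp3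
    rw [hXval]
    unfold epsThreshold18
    have hpq : 0 < p * q := by positivity
    have hc : 0 < 1 / max (a / (p * q)) r - p * q := by linarith
    have hkey : (1 / max (a / (p * q)) r - p * q) * x₀ ^ 2 ≤ (1 - p) * x₀ + p * (1 - q) := by
      rcases le_total (a / (p * q)) r with hmax | hmax
      · rw [max_eq_right hmax]
        have hd : a ≤ p * q * r := by
          have := (div_le_iff₀ hpq).mp hmax; nlinarith
        have e2 : q * (r * ((1 - p) * x₀ + p * (1 - q)) - (1 - p * q * r) * x₀ ^ 2)
            = (p * q * r - a) * ((x₀ - 1) * (q * x₀ - (1 - q))) := by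
          linear_combination (-1 : ℝ) * H
        have h2 : 0 ≤ q * (r * ((1 - p) * x₀ + p * (1 - q)) - (1 - p * q * r) * x₀ ^ 2) := by
          rw [e2]
          exact mul_nonneg (by linarith)
            (mul_nonneg (by linarith) (by linarith))
        have key2' : (1 - p * q * r) * x₀ ^ 2 ≤ r * ((1 - p) * x₀ + p * (1 - q)) := by
          nlinarith [h2, hq0]
        rw [show 1 / r - p * q = (1 - p * q * r) / r by field_simp,
          div_mul_eq_mul_div, div_le_iff₀ hr0]
        nlinarith [key2']
      · rw [max_eq_left hmax]
        have hd : p * q * r ≤ a := by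
          have := (le_div_iff₀ hpq).mp hmax; nlinarith
        have e1 : (p * q - p * q * a) * x₀ ^ 2 - a * ((1 - p) * x₀ + p * (1 - q))
            = x₀ * (p * q * r - a) := by
          linear_combination p * H
        have key1' : (p * q - p * q * a) * x₀ ^ 2 ≤ a * ((1 - p) * x₀ + p * (1 - q)) := by
          nlinarith [e1, mul_nonpos_of_nonneg_of_nonpos hx₀.le
            (by linarith : p * q * r - a ≤ 0)]
        rw [one_div_div,
          show p * q / a - p * q = (p * q - p * q * a) / a by field_simp,
          div_mul_eq_mul_div, div_le_iff₀ ha0]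
        nlinarith [key1']
    have hle := le_root (p * (1 - q)) (1 - p) (1 / max (a / (p * q)) r - p * q) x₀
      (by positivity) hc hx₀ (by nlinarith [hkey])
    rw [show 2 * p * (1 - q) = 2 * (p * (1 - q)) by ring,
      show (1 - p) ^ 2 + 4 * p * (1 - q) * (1 / max (a / (p * q)) r - p * q)
        = (1 - p) ^ 2 + 4 * (p * (1 - q)) * (1 / max (a / (p * q)) r - p * q) by ring]
    exact Real.log_le_log hx₀ hle
  · unfold epsThreshold18
    rw [hXval]
    have ha' : a ≠ 0 := ne_of_gt ha0
    have hpc : a / (q * r) * q = a / r := by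
      field_simp
    have hmax : max (a / (a / (q * r) * q)) r = r := by
      rw [hpc, show a / (a / r) = r by field_simp]
      exact max_self r
    rw [hmax, hpc]
    have hp₀ : 0 < a / (q * r) := by positivity
    have hc₂ : 0 < 1 / r - a / r := by
      rw [div_sub_div_same]; positivity
    have H₂ : (1 / r - a / r) * x₀ ^ 2 = (1 - a / (q * r)) * x₀ + a / (q * r) * (1 - q) := by
      clear_value x₀
      field_simp
      linear_combination H
    have h := eq_root (a / (q * r) * (1 - q)) (1 - a / (q * r)) (1 / r - a / r) x₀
      (by positivity) hc₂ hx₀ H₂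
    rw [show 2 * (a / (q * r)) * (1 - q) = 2 * (a / (q * r) * (1 - q)) by ring,
      show (1 - a / (q * r)) ^ 2 + 4 * (a / (q * r)) * (1 - q) * (1 / r - a / r)
        = (1 - a / (q * r)) ^ 2 + 4 * (a / (q * r) * (1 - q)) * (1 / r - a / r) by ring,
      h]
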